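/- arXiv:math/0303300 — 8 statements merged into one kernel-verified Lean document; each statement's English description precedes it below -/
import Mathlib

section
/- Let 𝕂 be a non-discrete topological field, E and F Hausdorff topological 𝕂-vector spaces, U ⊆ E open, and f : U → F a map. Suppose there exists a continuous map f¹ : U⁽¹⁾ → F, where U⁽¹⁾ = {(x,v,t) ∈ U × E × 𝕂 : x + t•v ∈ U}, such that f(x + t•v) − f(x) = t • f¹(x,v,t) for all (x,v,t) ∈ U⁽¹⁾. Then for each x ∈ U the map df(x) : E → F defined by df(x)(v) := f¹(x,v,0) is additive and 𝕂-homogeneous (i.e., 𝕂-linear). -/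
open Topology

/-! The differential at `x` is recovered as the value at `t = 0` of `t ↦ f¹(x, v, t)`. For
`t ≠ 0` the defining identity can be divided by `t`, which turns the decompositions
`x + t(v + w) = (x + tw) + tv` and `x + t(rv) = x + (tr)v` into the identities
`f¹(x, v + w, t) = f¹(x + tw, v, t) + f¹(x, w, t)` and `f¹(x, rv, t) = r f¹(x, v, tr)`.
Both sides are continuous in `t`, and since `0` is not isolated in `𝕂` the identities persist
at `t = 0`, where they become additivity and homogeneity. -/

theorem ContinuousAt.eq_of_eventuallyEq_nhdsNE {X Y : Type*} [TopologicalSpace X]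
    [TopologicalSpace Y] [T2Space Y] {g h : X → Y} {a : X} [(𝓝[≠] a).NeBot]
    (hg : ContinuousAt g a) (hh : ContinuousAt h a) (heq : g =ᶠ[𝓝[≠] a] h) : g a = h a :=
  tendsto_nhds_unique (hg.tendsto.mono_left nhdsWithin_le_nhds)
    ((hh.tendsto.mono_left nhdsWithin_le_nhds).congr' heq.symm)

section DiffQuot

variable {𝕂 E F : Type*} [Field 𝕂] [AddCommGroup E] [Module 𝕂 E] [AddCommGroup F] [Module 𝕂 F]
  {U : Set E} {f : E → F} {f1 : E × E × 𝕂 → F}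

theorem diffQuot_add_eq
    (hdq : ∀ (x v : E) (t : 𝕂), x ∈ U → x + t • v ∈ U → f (x + t • v) - f x = t • f1 (x, v, t))
    {x v w : E} {t : 𝕂} (ht : t ≠ 0) (hx : x ∈ U) (hw : x + t • w ∈ U)
    (hvw : x + t • (v + w) ∈ U) :
    f1 (x, v + w, t) = f1 (x + t • w, v, t) + f1 (x, w, t) := by
  have hsplit : x + t • (v + w) = x + t • w + t • v := by rw [smul_add]; abel
  refine smul_right_injective F ht ?_
  change t • f1 _ = t • (f1 _ + f1 _)
  rw [smul_add, ← hdq _ _ _ hx hvw, ← hdq _ _ _ hx hw, ← hdq _ _ _ hw (hsplit ▸ hvw), hsplit,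
    sub_add_sub_cancel]

theorem diffQuot_smul_eq
    (hdq : ∀ (x v : E) (t : 𝕂), x ∈ U → x + t • v ∈ U → f (x + t • v) - f x = t • f1 (x, v, t))
    {x v : E} {r t : 𝕂} (ht : t ≠ 0) (hx : x ∈ U) (hrv : x + t • r • v ∈ U) :
    f1 (x, r • v, t) = r • f1 (x, v, t * r) := by
  have hrv' : x + (t * r) • v ∈ U := by rwa [mul_smul]
  refine smul_right_injective F ht ?_
  change t • f1 _ = t • r • f1 _
  rw [smul_smul, ← hdq _ _ _ hx hrv, ← hdq _ _ _ hx hrv', mul_smul]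

end DiffQuot

section Topology

variable {𝕂 E : Type*} [Field 𝕂] [TopologicalSpace 𝕂] [AddCommGroup E] [Module 𝕂 E]
  [TopologicalSpace E] [ContinuousAdd E] [ContinuousSMul 𝕂 E] {U : Set E}

theorem IsOpen.setOf_add_smul_mem (hU : IsOpen U) :
    IsOpen {p : E × E × 𝕂 | p.1 ∈ U ∧ p.1 + p.2.2 • p.2.1 ∈ U} :=
  (hU.preimage continuous_fst).inter (hU.preimage (by fun_prop))

theorem IsOpen.eventually_add_smul_mem (hU : IsOpen U) {x : E} (hx : x ∈ U) (v : E) :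
    ∀ᶠ t in 𝓝 (0 : 𝕂), x + t • v ∈ U :=
  (continuous_const.add (continuous_id.smul continuous_const)).continuousAt.preimage_mem_nhds
    (by simpa using hU.mem_nhds hx)

end Topology

theorem stmt_0_general (𝕂 : Type*) [Field 𝕂] [TopologicalSpace 𝕂] [IsTopologicalRing 𝕂]
    (hK : Dense {t : 𝕂 | t ≠ 0})
    (E F : Type*) [AddCommGroup E] [Module 𝕂 E] [TopologicalSpace E]
    [IsTopologicalAddGroup E] [ContinuousSMul 𝕂 E]
    [AddCommGroup F] [Module 𝕂 F] [TopologicalSpace F]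
    [IsTopologicalAddGroup F] [ContinuousSMul 𝕂 F] [T2Space F]
    (U : Set E) (hU : IsOpen U) (f : E → F) (f1 : E × E × 𝕂 → F)
    (hcont : ContinuousOn f1 {p : E × E × 𝕂 | p.1 ∈ U ∧ p.1 + p.2.2 • p.2.1 ∈ U})
    (hdq : ∀ (x v : E) (t : 𝕂), x ∈ U → x + t • v ∈ U →
      f (x + t • v) - f x = t • f1 (x, v, t))
    (x : E) (hx : x ∈ U) :
    (∀ v w : E, f1 (x, v + w, 0) = f1 (x, v, 0) + f1 (x, w, 0)) ∧
    (∀ (r : 𝕂) (v : E), f1 (x, r • v, 0) = r • f1 (x, v, 0)) := by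
  have : (𝓝[≠] (0 : 𝕂)).NeBot := mem_closure_iff_nhdsWithin_neBot.mp (hK 0)
  have hf1 : ∀ γ : 𝕂 → E × E × 𝕂, Continuous γ → (γ 0).1 = x → (γ 0).2.2 = 0 →
      ContinuousAt (fun t => f1 (γ t)) 0 := fun γ hγ h1 h2 =>
    (hcont.continuousAt (hU.setOf_add_smul_mem.mem_nhds (by simp [h1, h2, hx]))).comp
      hγ.continuousAt
  constructor
  · intro v w
    have hagree : (fun t => f1 (x, v + w, t)) =ᶠ[𝓝[≠] 0]
        fun t => f1 (x + t • w, v, t) + f1 (x, w, t) := by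
      filter_upwards [self_mem_nhdsWithin,
        nhdsWithin_le_nhds (hU.eventually_add_smul_mem hx w),
        nhdsWithin_le_nhds (hU.eventually_add_smul_mem hx (v + w))] with t ht hw hvw
      exact diffQuot_add_eq hdq ht hx hw hvw
    simpa using ContinuousAt.eq_of_eventuallyEq_nhdsNE
      (hf1 (fun t => (x, v + w, t)) (by fun_prop) rfl rfl)
      ((hf1 (fun t => (x + t • w, v, t)) (by fun_prop) (by simp) rfl).add
        (hf1 (fun t => (x, w, t)) (by fun_prop) rfl rfl)) hagree
  · intro r v
    have hagree : (fun t => f1 (x, r • v, t)) =ᶠ[𝓝[≠] 0] fun t => r • f1 (x, v, t * r) := by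
      filter_upwards [self_mem_nhdsWithin,
        nhdsWithin_le_nhds (hU.eventually_add_smul_mem hx (r • v))] with t ht hrv
      exact diffQuot_smul_eq hdq ht hx hrv
    simpa using ContinuousAt.eq_of_eventuallyEq_nhdsNE
      (hf1 (fun t => (x, r • v, t)) (by fun_prop) rfl rfl)
      ((hf1 (fun t => (x, v, t * r)) (by fun_prop) rfl (zero_mul r)).const_smul r) hagree

/-- BGN differential calculus: if `f : U → F` admits a continuous difference-quotient map
`f¹` on `U⁽¹⁾ = {(x,v,t) : x ∈ U, x + t•v ∈ U}` satisfying
`f(x + t•v) - f(x) = t • f¹(x,v,t)`, then for each `x ∈ U` the differential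
`df(x) : v ↦ f¹(x,v,0)` is additive and `𝕂`-homogeneous. -/
theorem stmt_0 (𝕂 : Type*) [Field 𝕂] [TopologicalSpace 𝕂] [IsTopologicalRing 𝕂] [T2Space 𝕂]
    (hK : Dense {t : 𝕂 | t ≠ 0})
    (E F : Type*) [AddCommGroup E] [Module 𝕂 E] [TopologicalSpace E]
    [IsTopologicalAddGroup E] [ContinuousSMul 𝕂 E] [T2Space E]
    [AddCommGroup F] [Module 𝕂 F] [TopologicalSpace F]
    [IsTopologicalAddGroup F] [ContinuousSMul 𝕂 F] [T2Space F]
    (U : Set E) (hU : IsOpen U) (f : E → F) (f1 : E × E × 𝕂 → F)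
    (hcont : ContinuousOn f1 {p : E × E × 𝕂 | p.1 ∈ U ∧ p.1 + p.2.2 • p.2.1 ∈ U})
    (hdq : ∀ (x v : E) (t : 𝕂), x ∈ U → x + t • v ∈ U →
      f (x + t • v) - f x = t • f1 (x, v, t))
    (x : E) (hx : x ∈ U) :
    (∀ v w : E, f1 (x, v + w, 0) = f1 (x, v, 0) + f1 (x, w, 0)) ∧
    (∀ (r : 𝕂) (v : E), f1 (x, r • v, 0) = r • f1 (x, v, 0)) :=
  stmt_0_general 𝕂 hK E F U hU f f1 hcont hdq x hx
end

section
/- Let 𝕂 be a non-discrete Hausdorff topological field, E, F, H Hausdorff topological 𝕂-vector spaces, U ⊆ E, V ⊆ F open, and f : U → V, g : V → H continuous maps admitting continuous difference-quotient maps f¹ : U⁽¹⁾ → F (with image of f contained in V) and g¹ : V⁽¹⁾ → H satisfying f(x+t•v) − f(x) = t•f¹(x,v,t) and g(y+t•w) − g(y) = t•g¹(y,w,t). Then for every (x,v,t) ∈ U⁽¹⁾ we have (f(x), f¹(x,v,t), t) ∈ V⁽¹⁾, the map (x,v,t) ↦ g¹(f(x), f¹(x,v,t), t) is a continuous difference-quotient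 map for g ∘ f, and in particular d(g∘f)(x) v = dg(f(x))(df(x) v) for all x ∈ U, v ∈ E. -/
/-!
The composite difference quotient comes from the identity `f x + t • f¹(x,v,t) = f (x + t • v)`:
feeding `(f x, f¹(x,v,t), t)` into `g¹` computes the difference quotient of `g ∘ f`. At `t = 0`
it is pinned down by continuity, since all continuous difference quotients of a map agree where
`t ≠ 0` (divide by `t`) and `0` is not isolated in `𝕂`.
-/

open Topology Filter Set

/-- The set `U⁽¹⁾ = {(x, v, t) | x ∈ U, x + t • v ∈ U}`. -/
def diffQuotDomain (𝕂 : Type*) {E : Type*} [Add E] [SMul 𝕂 E] (U : Set E) : Set (E × E × 𝕂) :=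
  {p | p.1 ∈ U ∧ p.1 + p.2.2 • p.2.1 ∈ U}

def IsDiffQuotOn {𝕂 E F : Type*} [Add E] [SMul 𝕂 E] [Sub F] [SMul 𝕂 F]
    (f : E → F) (f1 : E × E × 𝕂 → F) (U : Set E) : Prop :=
  ∀ (x v : E) (t : 𝕂), x ∈ U → x + t • v ∈ U → f (x + t • v) - f x = t • f1 (x, v, t)

theorem ContinuousAt.eq_of_eventuallyEq_nhdsNE_s1 {X Y : Type*} [TopologicalSpace X] [T2Space X]
    [TopologicalSpace Y] {a : Y} [(𝓝[≠] a).NeBot] {φ ψ : Y → X} (hφ : ContinuousAt φ a)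
    (hψ : ContinuousAt ψ a) (hφψ : φ =ᶠ[𝓝[≠] a] ψ) : φ a = ψ a :=
  tendsto_nhds_unique_of_eventuallyEq (hφ.mono_left nhdsWithin_le_nhds)
    (hψ.mono_left nhdsWithin_le_nhds) hφψ

section Composition

variable {𝕂 E F : Type*} [AddCommGroup E] [SMul 𝕂 E] [AddCommGroup F] [SMul 𝕂 F]
  {U : Set E} {V : Set F} {f : E → F} {f1 : E × E × 𝕂 → F}

theorem IsDiffQuotOn.add_smul_eq (hf : IsDiffQuotOn f f1 U) {x v : E} {t : 𝕂} (hx : x ∈ U)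
    (hxt : x + t • v ∈ U) : f x + t • f1 (x, v, t) = f (x + t • v) := by
  rw [← hf x v t hx hxt, add_sub_cancel]

theorem IsDiffQuotOn.mapsTo_diffQuotDomain (hf : IsDiffQuotOn f f1 U) (hfV : MapsTo f U V) :
    MapsTo (fun p : E × E × 𝕂 => (f p.1, f1 p, p.2.2)) (diffQuotDomain 𝕂 U)
      (diffQuotDomain 𝕂 V) := fun _ ⟨hx, hxt⟩ =>
  ⟨hfV hx, (hf.add_smul_eq hx hxt).symm ▸ hfV hxt⟩

theorem IsDiffQuotOn.comp {H : Type*} [AddCommGroup H] [SMul 𝕂 H] {g : F → H}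
    {g1 : F × F × 𝕂 → H} (hg : IsDiffQuotOn g g1 V) (hf : IsDiffQuotOn f f1 U)
    (hfV : MapsTo f U V) :
    IsDiffQuotOn (g ∘ f) (fun p => g1 (f p.1, f1 p, p.2.2)) U := by
  intro x v t hx hxt
  obtain ⟨hfx, hfxt⟩ := hf.mapsTo_diffQuotDomain hfV (show (x, v, t) ∈ diffQuotDomain 𝕂 U from
    ⟨hx, hxt⟩)
  simpa only [Function.comp_apply, hf.add_smul_eq hx hxt] using hg (f x) (f1 (x, v, t)) t hfx hfxt

theorem ContinuousOn.diffQuot_comp [TopologicalSpace 𝕂] [TopologicalSpace E]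
    [TopologicalSpace F] {H : Type*} [TopologicalSpace H] {g1 : F × F × 𝕂 → H}
    (hg1 : ContinuousOn g1 (diffQuotDomain 𝕂 V)) (hf : ContinuousOn f U)
    (hf1 : ContinuousOn f1 (diffQuotDomain 𝕂 U)) (hfq : IsDiffQuotOn f f1 U)
    (hfV : MapsTo f U V) :
    ContinuousOn (fun p => g1 (f p.1, f1 p, p.2.2)) (diffQuotDomain 𝕂 U) :=
  hg1.comp ((hf.comp continuousOn_fst fun _ hp => hp.1).prodMk
    (hf1.prodMk continuous_snd.snd.continuousOn)) (hfq.mapsTo_diffQuotDomain hfV)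

end Composition

section Uniqueness

variable {𝕂 E F : Type*} [Field 𝕂] [AddCommGroup E] [Module 𝕂 E] [AddCommGroup F]
  [Module 𝕂 F] {U : Set E} {f : E → F} {h k : E × E × 𝕂 → F}

theorem mk_zero_mem_diffQuotDomain {x : E} (hx : x ∈ U) (v : E) :
    ((x, v, 0) : E × E × 𝕂) ∈ diffQuotDomain 𝕂 U :=
  ⟨hx, by simpa only [zero_smul, add_zero] using hx⟩

theorem isOpen_diffQuotDomain [TopologicalSpace 𝕂] [TopologicalSpace E] [ContinuousAdd E]
    [ContinuousSMul 𝕂 E] (hU : IsOpen U) : IsOpen (diffQuotDomain 𝕂 U) :=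
  (hU.prod hU).preimage (f := fun p : E × E × 𝕂 => (p.1, p.1 + p.2.2 • p.2.1)) (by fun_prop)

theorem IsDiffQuotOn.eq_of_ne_zero (hh : IsDiffQuotOn f h U) (hk : IsDiffQuotOn f k U)
    {x v : E} {t : 𝕂} (hx : x ∈ U) (hxt : x + t • v ∈ U) (ht : t ≠ 0) :
    h (x, v, t) = k (x, v, t) :=
  smul_right_injective F ht ((hh x v t hx hxt).symm.trans (hk x v t hx hxt))

theorem IsDiffQuotOn.eq_at_zero [TopologicalSpace 𝕂] [(𝓝[≠] (0 : 𝕂)).NeBot]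
    [TopologicalSpace E] [ContinuousAdd E] [ContinuousSMul 𝕂 E] [TopologicalSpace F]
    [T2Space F] (hU : IsOpen U) (hh : IsDiffQuotOn f h U) (hk : IsDiffQuotOn f k U)
    (hhc : ContinuousOn h (diffQuotDomain 𝕂 U)) (hkc : ContinuousOn k (diffQuotDomain 𝕂 U))
    {x : E} (hx : x ∈ U) (v : E) : h (x, v, 0) = k (x, v, 0) := by
  have hW : diffQuotDomain 𝕂 U ∈ 𝓝 ((x, v, 0) : E × E × 𝕂) :=
    (isOpen_diffQuotDomain hU).mem_nhds (mk_zero_mem_diffQuotDomain hx v)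
  have hline : ContinuousAt (fun t : 𝕂 => ((x, v, t) : E × E × 𝕂)) 0 := by fun_prop
  refine ContinuousAt.eq_of_eventuallyEq_nhdsNE_s1 (φ := fun t => h (x, v, t))
    ((hhc.continuousAt hW).comp (f := fun t : 𝕂 => (x, v, t)) hline)
    ((hkc.continuousAt hW).comp (f := fun t : 𝕂 => (x, v, t)) hline) ?_
  filter_upwards [nhdsWithin_le_nhds (hline.preimage_mem_nhds hW), self_mem_nhdsWithin]
    with t ⟨hx, hxt⟩ ht
  exact hh.eq_of_ne_zero hk hx hxt ht

end Uniqueness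

theorem stmt_1_general (𝕂 : Type*) [Field 𝕂] [TopologicalSpace 𝕂]
    (hK : Dense {t : 𝕂 | t ≠ 0})
    (E F H : Type*) [AddCommGroup E] [Module 𝕂 E] [TopologicalSpace E]
    [IsTopologicalAddGroup E] [ContinuousSMul 𝕂 E]
    [AddCommGroup F] [Module 𝕂 F] [TopologicalSpace F]
    [AddCommGroup H] [Module 𝕂 H] [TopologicalSpace H]
    [T2Space H]
    (U : Set E) (hU : IsOpen U) (V : Set F)
    (f : E → F) (g : F → H)
    (hf : ContinuousOn f U)
    (hfV : ∀ x ∈ U, f x ∈ V)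
    (f1 : E × E × 𝕂 → F) (g1 : F × F × 𝕂 → H)
    (hf1cont : ContinuousOn f1 {p : E × E × 𝕂 | p.1 ∈ U ∧ p.1 + p.2.2 • p.2.1 ∈ U})
    (hg1cont : ContinuousOn g1 {q : F × F × 𝕂 | q.1 ∈ V ∧ q.1 + q.2.2 • q.2.1 ∈ V})
    (hf1 : ∀ (x v : E) (t : 𝕂), x ∈ U → x + t • v ∈ U →
      f (x + t • v) - f x = t • f1 (x, v, t))
    (hg1 : ∀ (y w : F) (t : 𝕂), y ∈ V → y + t • w ∈ V →
      g (y + t • w) - g y = t • g1 (y, w, t)) :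
    -- the "lifted" point lies in V⁽¹⁾:
    (∀ (x v : E) (t : 𝕂), x ∈ U → x + t • v ∈ U →
      f x ∈ V ∧ f x + t • f1 (x, v, t) ∈ V) ∧
    -- (x,v,t) ↦ g¹(f(x), f¹(x,v,t), t) is a difference-quotient map for g ∘ f:
    (∀ (x v : E) (t : 𝕂), x ∈ U → x + t • v ∈ U →
      g (f (x + t • v)) - g (f x) = t • g1 (f x, f1 (x, v, t), t)) ∧
    -- and it is continuous on U⁽¹⁾:
    ContinuousOn (fun p : E × E × 𝕂 => g1 (f p.1, f1 p, p.2.2))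
      {p : E × E × 𝕂 | p.1 ∈ U ∧ p.1 + p.2.2 • p.2.1 ∈ U} ∧
    -- in particular d(g∘f)(x) = dg(f(x)) ∘ df(x): any continuous difference-quotient map `h`
    -- of `g ∘ f` satisfies `h(x,v,0) = g¹(f(x), f¹(x,v,0), 0)`.
    (∀ h : E × E × 𝕂 → H,
      ContinuousOn h {p : E × E × 𝕂 | p.1 ∈ U ∧ p.1 + p.2.2 • p.2.1 ∈ U} →
      (∀ (x v : E) (t : 𝕂), x ∈ U → x + t • v ∈ U →
        g (f (x + t • v)) - g (f x) = t • h (x, v, t)) →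
      ∀ x ∈ U, ∀ v : E, h (x, v, 0) = g1 (f x, f1 (x, v, 0), 0)) := by
  have hf1q : IsDiffQuotOn f f1 U := hf1
  have hcomp : IsDiffQuotOn (g ∘ f) (fun p => g1 (f p.1, f1 p, p.2.2)) U :=
    IsDiffQuotOn.comp hg1 hf1q hfV
  have hcompc : ContinuousOn (fun p => g1 (f p.1, f1 p, p.2.2)) (diffQuotDomain 𝕂 U) :=
    hg1cont.diffQuot_comp hf hf1cont hf1q hfV
  have : (𝓝[≠] (0 : 𝕂)).NeBot := mem_closure_iff_nhdsWithin_neBot.1 (hK 0)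
  exact ⟨fun x v t hx hxt => hf1q.mapsTo_diffQuotDomain hfV (show (x, v, t) ∈ _ from ⟨hx, hxt⟩),
    hcomp, hcompc, fun h hhc hh x hx v =>
      IsDiffQuotOn.eq_at_zero (f := g ∘ f) hU hh hcomp hhc hcompc hx v⟩

/-- BGN chain rule: if `f : U → V` and `g : V → H` admit continuous difference-quotient maps
`f¹`, `g¹`, then `(f(x), f¹(x,v,t), t) ∈ V⁽¹⁾` for `(x,v,t) ∈ U⁽¹⁾`, the map
`(x,v,t) ↦ g¹(f(x), f¹(x,v,t), t)` is a continuous difference-quotient map for `g ∘ f`,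
and `d(g∘f)(x)v = dg(f(x))(df(x)v)`. -/
theorem stmt_1 (𝕂 : Type*) [Field 𝕂] [TopologicalSpace 𝕂] [IsTopologicalRing 𝕂] [T2Space 𝕂]
    (hK : Dense {t : 𝕂 | t ≠ 0})
    (E F H : Type*) [AddCommGroup E] [Module 𝕂 E] [TopologicalSpace E]
    [IsTopologicalAddGroup E] [ContinuousSMul 𝕂 E] [T2Space E]
    [AddCommGroup F] [Module 𝕂 F] [TopologicalSpace F]
    [IsTopologicalAddGroup F] [ContinuousSMul 𝕂 F] [T2Space F]
    [AddCommGroup H] [Module 𝕂 H] [TopologicalSpace H]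
    [IsTopologicalAddGroup H] [ContinuousSMul 𝕂 H] [T2Space H]
    (U : Set E) (hU : IsOpen U) (V : Set F) (hV : IsOpen V)
    (f : E → F) (g : F → H)
    (hf : ContinuousOn f U) (hg : ContinuousOn g V)
    (hfV : ∀ x ∈ U, f x ∈ V)
    (f1 : E × E × 𝕂 → F) (g1 : F × F × 𝕂 → H)
    (hf1cont : ContinuousOn f1 {p : E × E × 𝕂 | p.1 ∈ U ∧ p.1 + p.2.2 • p.2.1 ∈ U})
    (hg1cont : ContinuousOn g1 {q : F × F × 𝕂 | q.1 ∈ V ∧ q.1 + q.2.2 • q.2.1 ∈ V})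
    (hf1 : ∀ (x v : E) (t : 𝕂), x ∈ U → x + t • v ∈ U →
      f (x + t • v) - f x = t • f1 (x, v, t))
    (hg1 : ∀ (y w : F) (t : 𝕂), y ∈ V → y + t • w ∈ V →
      g (y + t • w) - g y = t • g1 (y, w, t)) :
    -- the "lifted" point lies in V⁽¹⁾:
    (∀ (x v : E) (t : 𝕂), x ∈ U → x + t • v ∈ U →
      f x ∈ V ∧ f x + t • f1 (x, v, t) ∈ V) ∧
    -- (x,v,t) ↦ g¹(f(x), f¹(x,v,t), t) is a difference-quotient map for g ∘ f:
    (∀ (x v : E) (t : 𝕂), x ∈ U → x + t • v ∈ U →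
      g (f (x + t • v)) - g (f x) = t • g1 (f x, f1 (x, v, t), t)) ∧
    -- and it is continuous on U⁽¹⁾:
    ContinuousOn (fun p : E × E × 𝕂 => g1 (f p.1, f1 p, p.2.2))
      {p : E × E × 𝕂 | p.1 ∈ U ∧ p.1 + p.2.2 • p.2.1 ∈ U} ∧
    -- in particular d(g∘f)(x) = dg(f(x)) ∘ df(x): any continuous difference-quotient map `h`
    -- of `g ∘ f` satisfies `h(x,v,0) = g¹(f(x), f¹(x,v,0), 0)`.
    (∀ h : E × E × 𝕂 → H,
      ContinuousOn h {p : E × E × 𝕂 | p.1 ∈ U ∧ p.1 + p.2.2 • p.2.1 ∈ U} →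
      (∀ (x v : E) (t : 𝕂), x ∈ U → x + t • v ∈ U →
        g (f (x + t • v)) - g (f x) = t • h (x, v, t)) →
      ∀ x ∈ U, ∀ v : E, h (x, v, 0) = g1 (f x, f1 (x, v, 0), 0)) :=
  stmt_1_general 𝕂 hK E F H U hU V f g hf hfV f1 g1 hf1cont hg1cont hf1 hg1
end

section
/- Let 𝕂 be a non-discrete Hausdorff topological field and A a topological unital 𝕂-algebra whose unit group Aˣ is open and whose inversion map is continuous. Then inversion i : Aˣ → A is C¹ in the BGN sense, with difference-quotient map i¹(x,v,t) = −x⁻¹ • v • (x + t•v)⁻¹ for (x,v,t) with x, x+t•v ∈ Aˣ; in particular di(x)v = −x⁻¹ v x⁻¹. -/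
theorem Ring.inverse_add_smul_sub_inverse {𝕂 A : Type*} [Semiring 𝕂] [Ring A] [Module 𝕂 A]
    [SMulCommClass 𝕂 A A] [IsScalarTower 𝕂 A A] {x : A} (v : A) (t : 𝕂)
    (hx : IsUnit x) (hxv : IsUnit (x + t • v)) :
    Ring.inverse (x + t • v) - Ring.inverse x
      = t • -(Ring.inverse x * v * Ring.inverse (x + t • v)) := by
  rw [← neg_sub, Ring.inverse_sub_inverse (iff_of_true hx hxv), add_sub_cancel_left,
    mul_smul_comm, smul_mul_assoc, smul_neg]

theorem ContinuousOn.ringInverse_comp {X A : Type*} [TopologicalSpace X] [Ring A]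
    [TopologicalSpace A] (hinv : ContinuousOn (Ring.inverse : A → A) {x : A | IsUnit x})
    {f : X → A} (hf : Continuous f) :
    ContinuousOn (fun p => Ring.inverse (f p)) {p | IsUnit (f p)} :=
  hinv.comp hf.continuousOn fun _ h => h

theorem stmt_2_general (𝕂 : Type*) [Field 𝕂] [TopologicalSpace 𝕂]
    (A : Type*) [Ring A] [Algebra 𝕂 A] [TopologicalSpace A] [IsTopologicalRing A]
    [ContinuousSMul 𝕂 A]
    (hinv : ContinuousOn (Ring.inverse : A → A) {x : A | IsUnit x}) :
    -- the candidate difference-quotient map is continuous on (Aˣ)⁽¹⁾: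
    ContinuousOn (fun p : A × A × 𝕂 =>
        -(Ring.inverse p.1 * p.2.1 * Ring.inverse (p.1 + p.2.2 • p.2.1)))
      {p : A × A × 𝕂 | IsUnit p.1 ∧ IsUnit (p.1 + p.2.2 • p.2.1)} ∧
    -- and it satisfies the defining identity of a BGN difference-quotient map of inversion:
    (∀ (x v : A) (t : 𝕂), IsUnit x → IsUnit (x + t • v) →
      Ring.inverse (x + t • v) - Ring.inverse x
        = t • (-(Ring.inverse x * v * Ring.inverse (x + t • v)))) ∧
    -- in particular `di(x)v = -x⁻¹ v x⁻¹`: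
    (∀ x v : A, IsUnit x →
      -(Ring.inverse x * v * Ring.inverse (x + (0 : 𝕂) • v))
        = -(Ring.inverse x * v * Ring.inverse x)) := by
  refine ⟨?_, fun x v t hx hxv => Ring.inverse_add_smul_sub_inverse v t hx hxv,
    fun x v _ => by rw [zero_smul, add_zero]⟩
  have hinv_fst := hinv.ringInverse_comp (X := A × A × 𝕂) continuous_fst
  have hinv_shift := hinv.ringInverse_comp
    (continuous_fst.add (continuous_snd.snd.smul continuous_snd.fst) :
      Continuous fun p : A × A × 𝕂 => p.1 + p.2.2 • p.2.1)
  exact (((hinv_fst.mono fun _ hp => hp.1).mul continuous_snd.fst.continuousOn).mul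
    (hinv_shift.mono fun _ hp => hp.2)).neg

/-- In a topological unital `𝕂`-algebra with open unit group and continuous inversion,
inversion is C¹ in the BGN sense, with difference-quotient map
`i¹(x,v,t) = -x⁻¹ • v • (x + t•v)⁻¹`; in particular `di(x)v = -x⁻¹ v x⁻¹`. -/
theorem stmt_2 (𝕂 : Type*) [Field 𝕂] [TopologicalSpace 𝕂] [IsTopologicalRing 𝕂] [T2Space 𝕂]
    (hK : Dense {t : 𝕂 | t ≠ 0})
    (A : Type*) [Ring A] [Algebra 𝕂 A] [TopologicalSpace A] [IsTopologicalRing A] [T2Space A]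
    [ContinuousSMul 𝕂 A]
    (hopen : IsOpen {x : A | IsUnit x})
    (hinv : ContinuousOn (Ring.inverse : A → A) {x : A | IsUnit x}) :
    -- the candidate difference-quotient map is continuous on (Aˣ)⁽¹⁾:
    ContinuousOn (fun p : A × A × 𝕂 =>
        -(Ring.inverse p.1 * p.2.1 * Ring.inverse (p.1 + p.2.2 • p.2.1)))
      {p : A × A × 𝕂 | IsUnit p.1 ∧ IsUnit (p.1 + p.2.2 • p.2.1)} ∧
    -- and it satisfies the defining identity of a BGN difference-quotient map of inversion:
    (∀ (x v : A) (t : 𝕂), IsUnit x → IsUnit (x + t • v) →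
      Ring.inverse (x + t • v) - Ring.inverse x
        = t • (-(Ring.inverse x * v * Ring.inverse (x + t • v)))) ∧
    -- in particular `di(x)v = -x⁻¹ v x⁻¹`:
    (∀ x v : A, IsUnit x →
      -(Ring.inverse x * v * Ring.inverse (x + (0 : 𝕂) • v))
        = -(Ring.inverse x * v * Ring.inverse x)) :=
  stmt_2_general 𝕂 A hinv
end

section
/- Let 𝕂 be a field with a non-discrete Hausdorff topology in which 𝕂ˣ is dense, F a Hausdorff topological 𝕂-vector space, I ⊆ 𝕂 an open neighbourhood of 0, k ∈ ℕ, a₀,…,a_k ∈ F, and R : I → F a continuous map with R(0) = 0. If Σ_{j=0}^k t^j • a_j + t^k • R(t) = 0 for all t ∈ I, then a_j = 0 for all j = 0,…,k (and consequently R = 0). -/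
/-! Evaluating the expansion at `t = 0` kills every term but `a₀`, so `a₀ = 0`; what is left is
`t` times an expansion of the same shape of order `k - 1`. Dividing by `t` shows that this shorter
expansion vanishes for `t ≠ 0`, hence, being continuous, on all of `I` since `I ∩ 𝕂ˣ` is dense
in `I`. Induction on `k` finishes the proof. -/

open Finset Set

theorem sum_range_succ_smul_add_pow_smul {𝕂 F : Type*} [CommSemiring 𝕂] [AddCommMonoid F]
    [Module 𝕂 F] (a : ℕ → F) (R : 𝕂 → F) (k : ℕ) (t : 𝕂) :
    (∑ j ∈ range (k + 2), t ^ j • a j) + t ^ (k + 1) • R t =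
      a 0 + t • ((∑ j ∈ range (k + 1), t ^ j • a (j + 1)) + t ^ k • R t) := by
  simp only [sum_range_succ' _ (k + 1), smul_add, smul_sum, smul_smul, ← pow_succ', pow_zero,
    one_smul]
  abel

theorem continuousOn_sum_range_smul_add_pow_smul {𝕂 F : Type*} [Semiring 𝕂] [TopologicalSpace 𝕂]
    [ContinuousMul 𝕂] [AddCommMonoid F] [Module 𝕂 F] [TopologicalSpace F] [ContinuousAdd F]
    [ContinuousSMul 𝕂 F] {I : Set 𝕂} (a : ℕ → F) {R : 𝕂 → F}
    (hR : ContinuousOn R I) (k : ℕ) :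
    ContinuousOn (fun t => (∑ j ∈ range (k + 1), t ^ j • a j) + t ^ k • R t) I :=
  (continuous_finsetSum _ fun j _ => (continuous_pow j).smul continuous_const).continuousOn.add
    ((continuous_pow k).continuousOn.smul hR)

theorem eqOn_zero_of_smul_eq_zero {𝕂 F : Type*} [Field 𝕂] [TopologicalSpace 𝕂] [AddCommGroup F]
    [Module 𝕂 F] [TopologicalSpace F] [T2Space F]
    (hK : Dense {t : 𝕂 | t ≠ 0}) {I : Set 𝕂} (hI : IsOpen I) {g : 𝕂 → F}
    (hg : ContinuousOn g I) (hsmul : ∀ t ∈ I, t • g t = 0) : ∀ t ∈ I, g t = 0 := by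
  have hD : EqOn g 0 (I ∩ {t | t ≠ 0}) := fun t ⟨ht, hne⟩ =>
    (smul_eq_zero.mp (hsmul t ht)).resolve_left hne
  exact hD.of_subset_closure hg continuousOn_const inter_subset_left
    (hK.open_subset_closure_inter hI)

theorem stmt_6_general (𝕂 : Type*) [Field 𝕂] [TopologicalSpace 𝕂] [IsTopologicalRing 𝕂]
    (hK : Dense {t : 𝕂 | t ≠ 0})
    (F : Type*) [AddCommGroup F] [Module 𝕂 F] [TopologicalSpace F]
    [IsTopologicalAddGroup F] [ContinuousSMul 𝕂 F] [T2Space F]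
    (I : Set 𝕂) (hI : IsOpen I) (h0 : (0 : 𝕂) ∈ I) (k : ℕ)
    (a : ℕ → F) (R : 𝕂 → F) (hR : ContinuousOn R I) (hR0 : R 0 = 0)
    (hexp : ∀ t ∈ I, (∑ j ∈ Finset.range (k + 1), t ^ j • a j) + t ^ k • R t = 0) :
    (∀ j ≤ k, a j = 0) ∧ ∀ t ∈ I, R t = 0 := by
  induction k generalizing a with
  | zero =>
    simp only [zero_add, sum_range_one, pow_zero, one_smul] at hexp
    have ha0 : a 0 = 0 := by simpa [hR0] using hexp 0 h0
    exact ⟨fun j hj => by rwa [Nat.le_zero.mp hj], fun t ht => by simpa [ha0] using hexp t ht⟩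
  | succ k ih =>
    simp only [sum_range_succ_smul_add_pow_smul] at hexp
    have ha0 : a 0 = 0 := by simpa using hexp 0 h0
    have hshift := eqOn_zero_of_smul_eq_zero hK hI
      (continuousOn_sum_range_smul_add_pow_smul (fun j => a (j + 1)) hR k)
      fun t ht => by simpa [ha0] using hexp t ht
    obtain ⟨ha, hRI⟩ := ih (fun j => a (j + 1)) hshift
    refine ⟨fun j hj => ?_, hRI⟩
    rcases j with _ | j
    · exact ha0
    · exact ha j (Nat.succ_le_succ_iff.mp hj)

/-- Uniqueness of finite Taylor-type expansions (Lemma 5.2 of Bertram–Glöckner–Neeb):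
if `Σ_{j=0}^k t^j • a_j + t^k • R(t) = 0` on an open zero-neighbourhood `I`, with `R`
continuous and `R(0) = 0`, then all coefficients `a_j` vanish, and `R` vanishes on `I`. -/
theorem stmt_6 (𝕂 : Type*) [Field 𝕂] [TopologicalSpace 𝕂] [IsTopologicalRing 𝕂] [T2Space 𝕂]
    (hK : Dense {t : 𝕂 | t ≠ 0})
    (F : Type*) [AddCommGroup F] [Module 𝕂 F] [TopologicalSpace F]
    [IsTopologicalAddGroup F] [ContinuousSMul 𝕂 F] [T2Space F]
    (I : Set 𝕂) (hI : IsOpen I) (h0 : (0 : 𝕂) ∈ I) (k : ℕ)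
    (a : ℕ → F) (R : 𝕂 → F) (hR : ContinuousOn R I) (hR0 : R 0 = 0)
    (hexp : ∀ t ∈ I, (∑ j ∈ Finset.range (k + 1), t ^ j • a j) + t ^ k • R t = 0) :
    (∀ j ≤ k, a j = 0) ∧ ∀ t ∈ I, R t = 0 :=
  stmt_6_general 𝕂 hK F I hI h0 k a R hR hR0 hexp
end

section
/- Let 𝕂 be a field with a non-discrete Hausdorff topology in which 𝕂ˣ is dense, F a Hausdorff topological 𝕂-vector space, I ⊆ 𝕂 an open zero-neighbourhood, k ∈ ℕ, p ≤ k, and f : I → F of the form f(t) = Σ_{j=0}^k t^j • a_j + t^k • R(t) with a_j ∈ F and R : I → F continuous with R(0) = 0. If f is homogeneous of degree p in the sense that f(s•t) = s^p • f(t) whenever t ∈ I, s ∈ 𝕂, s•t ∈ I, then R = 0, a_j = 0 for all j ≠ p, and f(t) = t^p • a_p for all t ∈ I. -/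
/-!
Fix `t ∈ I`. On the open zero-neighbourhood `{s | s * t ∈ I}`, the map `s ↦ f (s * t)` has two
expansions of order `k`: the given one, with coefficients `t ^ j • a j` and remainder
`t ^ k • R (s * t)`, and the one `s ^ p • f t` coming from homogeneity. Such expansions are
unique: the constant term is read off at `s = 0`, after which one divides by `s` on the dense
set `s ≠ 0` and extends by continuity. Comparing the two expansions gives
`t ^ j • a j = 0` for `j ≠ p`, `t ^ p • a p = f t` and `t ^ k • R t = 0`.
-/

open Set

lemma ContinuousOn.eq_zero_of_eq_zero_of_ne {X F : Type*} [TopologicalSpace X]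
    [TopologicalSpace F] [T2Space F] [Zero F] {x₀ : X} (hx₀ : Dense {x | x ≠ x₀})
    {J : Set X} (hJ : IsOpen J) {g : X → F} (hg : ContinuousOn g J)
    (h : ∀ x ∈ J, x ≠ x₀ → g x = 0) : ∀ x ∈ J, g x = 0 :=
  EqOn.of_subset_closure (g := 0) (fun x hx => h x hx.1 hx.2) hg continuousOn_const
    inter_subset_left (hx₀.open_subset_closure_inter hJ)

lemma expansion_succ {𝕂 F : Type*} [Semiring 𝕂] [AddCommMonoid F] [Module 𝕂 F] (k : ℕ)
    (b : ℕ → F) (r : 𝕂 → F) (s : 𝕂) :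
    (∑ j ∈ Finset.range (k + 2), s ^ j • b j) + s ^ (k + 1) • r s
      = b 0 + s • ((∑ j ∈ Finset.range (k + 1), s ^ j • b (j + 1)) + s ^ k • r s) := by
  simp only [Finset.sum_range_succ' _ (k + 1), smul_add, Finset.smul_sum, pow_succ', mul_smul,
    pow_zero, one_smul]
  abel

section Expansion

variable {𝕂 : Type*} [Field 𝕂] [TopologicalSpace 𝕂] [ContinuousMul 𝕂]
  {F : Type*} [AddCommGroup F] [Module 𝕂 F] [TopologicalSpace F]
  [ContinuousAdd F] [ContinuousSMul 𝕂 F] [T2Space F]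

lemma eq_zero_of_expansion_eq_zero (hK : Dense {t : 𝕂 | t ≠ 0}) {J : Set 𝕂} (hJ : IsOpen J)
    (h0 : (0 : 𝕂) ∈ J) (k : ℕ) (b : ℕ → F) {r : 𝕂 → F} (hr : ContinuousOn r J)
    (hr0 : r 0 = 0) (h : ∀ s ∈ J, (∑ j ∈ Finset.range (k + 1), s ^ j • b j) + s ^ k • r s = 0) :
    (∀ j ≤ k, b j = 0) ∧ ∀ s ∈ J, r s = 0 := by
  induction k generalizing b with
  | zero =>
    have hb0 : b 0 = 0 := by simpa [hr0] using h 0 h0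
    exact ⟨fun j hj => Nat.le_zero.mp hj ▸ hb0, fun s hs => by simpa [hb0] using h s hs⟩
  | succ k ih =>
    have hb0 : b 0 = 0 := by simpa using (expansion_succ k b r 0).symm.trans (h 0 h0)
    have hshift_cont : ContinuousOn
        (fun s => (∑ j ∈ Finset.range (k + 1), s ^ j • b (j + 1)) + s ^ k • r s) J :=
      (continuous_finsetSum _ fun j _ => (continuous_pow j).smul continuous_const).continuousOn.add
        ((continuous_pow k).continuousOn.smul hr)
    have hshift := hshift_cont.eq_zero_of_eq_zero_of_ne hK hJ fun s hs hs0 =>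
      (smul_eq_zero.mp (by simpa [expansion_succ, hb0] using h s hs)).resolve_left hs0
    obtain ⟨hb, hr_zero⟩ := ih (fun j => b (j + 1)) hshift
    refine ⟨fun j hj => ?_, hr_zero⟩
    cases j with
    | zero => exact hb0
    | succ j => exact hb j (Nat.succ_le_succ_iff.mp hj)

lemma expansion_coeff_of_homogeneous (hK : Dense {t : 𝕂 | t ≠ 0}) {I : Set 𝕂} (hI : IsOpen I)
    (h0 : (0 : 𝕂) ∈ I) {k p : ℕ} (hpk : p ≤ k) (a : ℕ → F) {R : 𝕂 → F}
    (hR : ContinuousOn R I) (hR0 : R 0 = 0) {f : 𝕂 → F}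
    (hexp : ∀ t ∈ I, f t = (∑ j ∈ Finset.range (k + 1), t ^ j • a j) + t ^ k • R t)
    (hhom : ∀ t ∈ I, ∀ s : 𝕂, s * t ∈ I → f (s * t) = s ^ p • f t) {t : 𝕂} (ht : t ∈ I) :
    (∀ j ≤ k, t ^ j • a j = if j = p then f t else 0) ∧ t ^ k • R t = 0 := by
  set J : Set 𝕂 := (· * t) ⁻¹' I
  have hJ : IsOpen J := hI.preimage (continuous_mul_const t)
  have hJ0 : (0 : 𝕂) ∈ J := by simpa [J] using h0
  have hr : ContinuousOn (fun s => t ^ k • R (s * t)) J :=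
    (hR.comp (continuous_mul_const t).continuousOn (mapsTo_preimage _ _)).const_smul _
  have hdiff : ∀ s ∈ J, (∑ j ∈ Finset.range (k + 1),
      s ^ j • (t ^ j • a j - if j = p then f t else 0)) + s ^ k • t ^ k • R (s * t) = 0 := by
    intro s hs
    have hp : p ∈ Finset.range (k + 1) := Finset.mem_range.mpr (Nat.lt_succ_of_le hpk)
    simp only [smul_sub, smul_ite, smul_zero, Finset.sum_sub_distrib, Finset.sum_ite_eq', if_pos hp,
      smul_smul, ← mul_pow]
    rw [← hhom t ht s hs, hexp (s * t) hs]
    abel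
  obtain ⟨hb, hr_zero⟩ := eq_zero_of_expansion_eq_zero hK hJ hJ0 k _ hr (by simp [hR0]) hdiff
  exact ⟨fun j hj => sub_eq_zero.mp (hb j hj), by simpa using hr_zero 1 (by simpa [J] using ht)⟩

end Expansion

theorem stmt_7_general (𝕂 : Type*) [Field 𝕂] [TopologicalSpace 𝕂] [IsTopologicalRing 𝕂]
    (hK : Dense {t : 𝕂 | t ≠ 0})
    (F : Type*) [AddCommGroup F] [Module 𝕂 F] [TopologicalSpace F]
    [IsTopologicalAddGroup F] [ContinuousSMul 𝕂 F] [T2Space F]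
    (I : Set 𝕂) (hI : IsOpen I) (h0 : (0 : 𝕂) ∈ I) (k p : ℕ) (hpk : p ≤ k)
    (a : ℕ → F) (R : 𝕂 → F) (hR : ContinuousOn R I) (hR0 : R 0 = 0)
    (f : 𝕂 → F)
    (hexp : ∀ t ∈ I, f t = (∑ j ∈ Finset.range (k + 1), t ^ j • a j) + t ^ k • R t)
    (hhom : ∀ t ∈ I, ∀ s : 𝕂, s * t ∈ I → f (s * t) = s ^ p • f t) :
    (∀ t ∈ I, R t = 0) ∧ (∀ j ≤ k, j ≠ p → a j = 0) ∧ ∀ t ∈ I, f t = t ^ p • a p := by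
  have hcoeff := fun t (ht : t ∈ I) =>
    expansion_coeff_of_homogeneous hK hI h0 hpk a hR hR0 hexp hhom ht
  obtain ⟨t₀, ht₀, ht₀I⟩ := hK.exists_mem_open hI ⟨0, h0⟩
  refine ⟨fun t ht => ?_, fun j hj hjp => ?_, fun t ht => ?_⟩
  · rcases eq_or_ne t 0 with rfl | hne
    · exact hR0
    · exact (smul_eq_zero.mp (hcoeff t ht).2).resolve_left (pow_ne_zero k hne)
  · have h := (hcoeff t₀ ht₀I).1 j hj
    rw [if_neg hjp] at h
    exact (smul_eq_zero.mp h).resolve_left (pow_ne_zero j ht₀)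
  · simpa using ((hcoeff t ht).1 p hpk).symm

/-- Homogeneity kills all expansion coefficients except the one of the right degree
(Lemma 5.2, final part, of Bertram–Glöckner–Neeb): if `f(t) = Σ_{j=0}^k t^j • a_j + t^k • R(t)`
on an open zero-neighbourhood `I`, with `R` continuous, `R(0) = 0`, and `f` is homogeneous of
degree `p ≤ k`, then `R = 0` on `I`, `a_j = 0` for `j ≠ p`, and `f(t) = t^p • a_p` on `I`. -/
theorem stmt_7 (𝕂 : Type*) [Field 𝕂] [TopologicalSpace 𝕂] [IsTopologicalRing 𝕂] [T2Space 𝕂]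
    (hK : Dense {t : 𝕂 | t ≠ 0})
    (F : Type*) [AddCommGroup F] [Module 𝕂 F] [TopologicalSpace F]
    [IsTopologicalAddGroup F] [ContinuousSMul 𝕂 F] [T2Space F]
    (I : Set 𝕂) (hI : IsOpen I) (h0 : (0 : 𝕂) ∈ I) (k p : ℕ) (hpk : p ≤ k)
    (a : ℕ → F) (R : 𝕂 → F) (hR : ContinuousOn R I) (hR0 : R 0 = 0)
    (f : 𝕂 → F)
    (hexp : ∀ t ∈ I, f t = (∑ j ∈ Finset.range (k + 1), t ^ j • a j) + t ^ k • R t)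
    (hhom : ∀ t ∈ I, ∀ s : 𝕂, s * t ∈ I → f (s * t) = s ^ p • f t) :
    (∀ t ∈ I, R t = 0) ∧ (∀ j ≤ k, j ≠ p → a j = 0) ∧ ∀ t ∈ I, f t = t ^ p • a p :=
  stmt_7_general 𝕂 hK F I hI h0 k p hpk a R hR hR0 f hexp hhom
end

section
/- Let 𝕂 be a field, F a 𝕂-vector space, U ⊆ 𝕂 a set, f : U → F, and n ∈ ℕ. Then for all 2n points y₁,…,y_n, x₁,…,x_n ∈ U which are pairwise distinct, the divided differences satisfy f^{>n-1<}(y₁,…,y_n) − f^{>n-1<}(x₁,…,x_n) = Σ_{j=1}^n (y_j − x_j) • f^{>n<}(x₁,…,x_j, y_j, …, y_n). -/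
/-!
For pairwise distinct nodes, divided differences have the Lagrange form
`f^{>n<}(t) = ∑ᵢ wᵢ • f(tᵢ)` with the nodal weights `wᵢ = ∏_{j ≠ i} (tᵢ - tⱼ)⁻¹`. Hence they are
symmetric in the nodes, and the defining recursion may be pivoted on any two of them. Pivoting the
tuple `(x₀, …, x_j, y_j, …, y_m)` on `x_j` and `y_j` turns the `j`-th summand into `g_j - g_{j+1}`
with `g_j = f^{>m<}(x₀, …, x_{j-1}, y_j, …, y_m)`, and the sum telescopes from `g₀` to `g_{m+1}`.
-/

/-- The `n`-th divided difference of `f`, defined recursively on `(n+1)`-tuples by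
`f^{>0<}(x₁) = f(x₁)` and
`f^{>n<}(x₁,…,x_{n+1}) = (f^{>n-1<}(x₁,x₃,…,x_{n+1}) − f^{>n-1<}(x₂,x₃,…,x_{n+1}))/(x₁−x₂)`. -/
noncomputable def divDiff {𝕂 F : Type*} [Field 𝕂] [AddCommGroup F] [Module 𝕂 F]
    (f : 𝕂 → F) : (n : ℕ) → (Fin (n + 1) → 𝕂) → F
  | 0, t => f (t 0)
  | n + 1, t => (t 0 - t 1)⁻¹ •
      (divDiff f n (fun i => if i = 0 then t 0 else t i.succ) -
       divDiff f n (fun i => if i = 0 then t 1 else t i.succ))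

open Finset Lagrange

section
variable {𝕂 : Type*} [Field 𝕂]

theorem nodalWeight_comp_succAbove_mul {n : ℕ} (t : Fin (n + 1) → 𝕂) (p : Fin (n + 1))
    (i : Fin n) :
    nodalWeight univ (t ∘ p.succAbove) i * (t (p.succAbove i) - t p)⁻¹
      = nodalWeight univ t (p.succAbove i) := by
  have himage : (univ.erase i).image p.succAbove = (univ.erase (p.succAbove i)).erase p := by
    rw [image_erase Fin.succAbove_right_injective, Fin.image_succAbove_univ, erase_right_comm,
      compl_eq_univ_sdiff, sdiff_singleton_eq_erase]
  simp only [nodalWeight, Function.comp_apply]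
  rw [← prod_image (f := fun k => (t (p.succAbove i) - t k)⁻¹)
      (fun _ _ _ _ h => Fin.succAbove_right_injective h),
    himage, prod_erase_mul _ _ (mem_erase.2 ⟨(Fin.succAbove_ne p i).symm, mem_univ p⟩)]

variable {F : Type*} [AddCommGroup F] [Module 𝕂 F]

theorem sum_nodalWeight_comp_succAbove_smul {n : ℕ} (f : 𝕂 → F) (t : Fin (n + 1) → 𝕂)
    (ht : Function.Injective t) (p : Fin (n + 1)) :
    ∑ i, nodalWeight univ (t ∘ p.succAbove) i • f (t (p.succAbove i))
      = ∑ k, (nodalWeight univ t k * (t k - t p)) • f (t k) := by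
  rw [Fin.sum_univ_succAbove _ p, sub_self, mul_zero, zero_smul, zero_add]
  refine sum_congr rfl fun i _ => ?_
  have hne : t (p.succAbove i) - t p ≠ 0 := sub_ne_zero.2 (ht.ne (Fin.succAbove_ne p i))
  rw [← nodalWeight_comp_succAbove_mul, inv_mul_cancel_right₀ hne]

theorem sum_nodalWeight_smul_eq_of_ne {n : ℕ} (f : 𝕂 → F) (t : Fin (n + 2) → 𝕂)
    (ht : Function.Injective t) {a b : Fin (n + 2)} (hab : a ≠ b) :
    (t a - t b)⁻¹ •
      (∑ i, nodalWeight univ (t ∘ b.succAbove) i • f (t (b.succAbove i)) -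
        ∑ i, nodalWeight univ (t ∘ a.succAbove) i • f (t (a.succAbove i)))
      = ∑ k, nodalWeight univ t k • f (t k) := by
  have hne : t a - t b ≠ 0 := sub_ne_zero.2 (ht.ne hab)
  simp only [sum_nodalWeight_comp_succAbove_smul f t ht, ← sum_sub_distrib, ← sub_smul,
    smul_sum, smul_smul]
  refine sum_congr rfl fun k _ => ?_
  congr 1
  field_simp
  ring

theorem divDiff_succ_eq_succAbove (f : 𝕂 → F) {n : ℕ} (t : Fin (n + 2) → 𝕂) :
    divDiff f (n + 1) t
      = (t 0 - t 1)⁻¹ •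
        (divDiff f n (t ∘ Fin.succAbove 1) - divDiff f n (t ∘ Fin.succAbove 0)) := by
  rw [divDiff]
  congr 3 <;> funext i <;> cases i using Fin.cases <;> simp [Fin.succAbove, Fin.lt_def]

theorem divDiff_eq_sum_nodalWeight_smul (f : 𝕂 → F) :
    ∀ (n : ℕ) (t : Fin (n + 1) → 𝕂), Function.Injective t →
      divDiff f n t = ∑ i, nodalWeight univ t i • f (t i)
  | 0, t, _ => by simp [divDiff, nodalWeight]
  | n + 1, t, ht => by
    rw [divDiff_succ_eq_succAbove,
      divDiff_eq_sum_nodalWeight_smul f n _ (ht.comp Fin.succAbove_right_injective),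
      divDiff_eq_sum_nodalWeight_smul f n _ (ht.comp Fin.succAbove_right_injective)]
    exact sum_nodalWeight_smul_eq_of_ne f t ht zero_ne_one

theorem divDiff_succ_eq_of_ne (f : 𝕂 → F) {n : ℕ} (t : Fin (n + 2) → 𝕂)
    (ht : Function.Injective t) {a b : Fin (n + 2)} (hab : a ≠ b) :
    divDiff f (n + 1) t
      = (t a - t b)⁻¹ • (divDiff f n (t ∘ b.succAbove) - divDiff f n (t ∘ a.succAbove)) := by
  simp only [divDiff_eq_sum_nodalWeight_smul f _ _ ht,
    divDiff_eq_sum_nodalWeight_smul f _ _ (ht.comp Fin.succAbove_right_injective),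
    ← sum_nodalWeight_smul_eq_of_ne f t ht hab, Function.comp_apply]

theorem comp_succAbove_mk {α : Type*} {n : ℕ} (g : ℕ → α) (v : ℕ) (hv : v < n + 1) :
    (fun k : Fin (n + 1) => g k) ∘ (⟨v, hv⟩ : Fin (n + 1)).succAbove
      = fun k : Fin n => g (if (k : ℕ) < v then k else k + 1) := by
  funext k
  simp only [Function.comp_apply, Fin.succAbove, Fin.lt_def, Fin.val_castSucc]
  split_ifs <;> rfl

theorem injective_prefix_suffix_of_pairwise_ne {α : Type*} {m j : ℕ} (x y : ℕ → α) (hj : j ≤ m)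
    (hdist : ∀ i ≤ m, ∀ i' ≤ m,
      (i ≠ i' → x i ≠ x i') ∧ (i ≠ i' → y i ≠ y i') ∧ x i ≠ y i') :
    Function.Injective fun k : Fin (m + 2) => if (k : ℕ) ≤ j then x k else y (k - 1) := by
  intro k l hkl
  by_contra hne
  have hne' : (k : ℕ) ≠ l := Fin.val_ne_of_ne hne
  have hk := k.isLt
  have hl := l.isLt
  dsimp only at hkl
  split_ifs at hkl
  · exact (hdist k (by omega) l (by omega)).1 hne' hkl
  · exact (hdist k (by omega) (l - 1) (by omega)).2.2 hkl
  · exact (hdist l (by omega) (k - 1) (by omega)).2.2 hkl.symm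
  · exact (hdist (k - 1) (by omega) (l - 1) (by omega)).2.1 (by omega) hkl

theorem smul_divDiff_prefix_suffix_eq_sub (f : 𝕂 → F) (x y : ℕ → 𝕂) {m j : ℕ} (hj : j ≤ m)
    (ht : Function.Injective fun k : Fin (m + 2) => if (k : ℕ) ≤ j then x k else y (k - 1)) :
    (y j - x j) •
        divDiff f (m + 1) (fun k : Fin (m + 2) => if (k : ℕ) ≤ j then x k else y (k - 1))
      = divDiff f m (fun k : Fin (m + 1) => if (k : ℕ) < j then x k else y k)
        - divDiff f m (fun k : Fin (m + 1) => if (k : ℕ) < j + 1 then x k else y k) := by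
  have hab : (⟨j, by omega⟩ : Fin (m + 2)) ≠ ⟨j + 1, by omega⟩ := by simp
  have hxy : x j - y j ≠ 0 := sub_ne_zero.2 (by simpa using ht.ne hab)
  have hremove : ∀ v, j ≤ v → v ≤ j + 1 → ∀ k : ℕ,
      (if (if k < v then k else k + 1) ≤ j then x (if k < v then k else k + 1)
        else y ((if k < v then k else k + 1) - 1)) = if k < v then x k else y k := by
    intro v hv hv' k
    split_ifs <;> first | rfl | omega
  rw [divDiff_succ_eq_of_ne f _ ht hab,
    comp_succAbove_mk (fun k => if k ≤ j then x k else y (k - 1)),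
    comp_succAbove_mk (fun k => if k ≤ j then x k else y (k - 1))]
  simp only [hremove j le_rfl j.le_succ, hremove (j + 1) j.le_succ le_rfl, le_refl, if_true,
    Nat.not_succ_le_self, if_false, Nat.add_sub_cancel, smul_smul]
  rw [← neg_sub (x j), neg_mul, mul_inv_cancel₀ hxy, neg_one_smul, neg_sub]

end

theorem stmt_9_general (𝕂 F : Type*) [Field 𝕂] [AddCommGroup F] [Module 𝕂 F]
    (f : 𝕂 → F) (m : ℕ) (x y : ℕ → 𝕂)
    (hdist : ∀ i ≤ m, ∀ j ≤ m,
      (i ≠ j → x i ≠ x j) ∧ (i ≠ j → y i ≠ y j) ∧ x i ≠ y j) :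
    divDiff f m (fun i => y i) - divDiff f m (fun i => x i)
      = ∑ j : Fin (m + 1), (y j - x j) •
          divDiff f (m + 1)
            (fun k : Fin (m + 2) => if (k : ℕ) ≤ (j : ℕ) then x k else y (k - 1)) := by
  set g : ℕ → F := fun j => divDiff f m fun k => if (k : ℕ) < j then x k else y k
  have hg0 : g 0 = divDiff f m (fun i => y i) := by simp [g]
  have hgm : g (m + 1) = divDiff f m (fun i => x i) := by simp [g, Fin.is_le]
  simp only [fun j : Fin (m + 1) => smul_divDiff_prefix_suffix_eq_sub f x y j.is_le
    (injective_prefix_suffix_of_pairwise_ne x y j.is_le hdist)]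
  rw [Fin.sum_univ_eq_sum_range (fun j => g j - g (j + 1)), sum_range_sub', hg0, hgm]

/-- Telescoping identity for divided differences (Lemma 6.6(b) of Bertram–Glöckner–Neeb):
for `2n` pairwise distinct points `y₁,…,y_n, x₁,…,x_n` (here `n = m+1`, `0`-indexed),
`f^{>n-1<}(y₁,…,y_n) − f^{>n-1<}(x₁,…,x_n)
  = Σ_{j=1}^n (y_j − x_j) • f^{>n<}(x₁,…,x_j, y_j,…,y_n)`. -/
theorem stmt_9 (𝕂 F : Type*) [Field 𝕂] [AddCommGroup F] [Module 𝕂 F]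
    (U : Set 𝕂) (f : 𝕂 → F) (m : ℕ) (x y : ℕ → 𝕂)
    (hxU : ∀ i ≤ m, x i ∈ U) (hyU : ∀ i ≤ m, y i ∈ U)
    (hdist : ∀ i ≤ m, ∀ j ≤ m,
      (i ≠ j → x i ≠ x j) ∧ (i ≠ j → y i ≠ y j) ∧ x i ≠ y j) :
    divDiff f m (fun i => y i) - divDiff f m (fun i => x i)
      = ∑ j : Fin (m + 1), (y j - x j) •
          divDiff f (m + 1)
            (fun k : Fin (m + 2) => if (k : ℕ) ≤ (j : ℕ) then x k else y (k - 1)) :=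
  stmt_9_general 𝕂 F f m x y hdist
end

section
/- Let E, F be abelian groups, k ∈ ℕ, and q : E → F a map. Define iterated difference operators by Δ_v q(x) := q(x+v) − q(x). Then the following are equivalent: (1) Δ_{v₀}⋯Δ_{v_k} q(x) = 0 for all v₀,…,v_k, x ∈ E; (2) Δ_{v₀}⋯Δ_{v_k} q(0) = 0 for all v₀,…,v_k ∈ E; (3) for each x ∈ E, the map (v₁,…,v_k) ↦ Δ_{v₁}⋯Δ_{v_k} q(x) is additive in each of its k arguments; (4) the map (v₁,…,v_k) ↦ Δ_{v₁}⋯Δ_{v_k} q(0) is additive in each argument. -/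
/-- The first-order difference operator `Δ_v f(x) := f(x+v) − f(x)`. -/
def delta {E F : Type*} [AddCommGroup E] [AddCommGroup F] (v : E) (f : E → F) : E → F :=
  fun x => f (x + v) - f x

/-- The iterated difference operator `Δ_{v₁} ⋯ Δ_{v_n} f`. -/
def iterDelta {E F : Type*} [AddCommGroup E] [AddCommGroup F] :
    (n : ℕ) → (Fin n → E) → (E → F) → (E → F)
  | 0, _, f => f
  | n + 1, v, f => delta (v 0) (iterDelta n (fun i => v i.succ) f)

section Aux

variable {E F : Type*} [AddCommGroup E] [AddCommGroup F]

lemma delta_comm (a b : E) (f : E → F) : delta a (delta b f) = delta b (delta a f) := by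
  funext x
  simp only [delta]
  rw [add_right_comm]
  abel

lemma iterDelta_delta (n : ℕ) (v : Fin n → E) (a : E) (f : E → F) :
    iterDelta n v (delta a f) = delta a (iterDelta n v f) := by
  induction n with
  | zero => rfl
  | succ n ih =>
    show delta (v 0) (iterDelta n _ (delta a f)) = delta a (delta (v 0) (iterDelta n _ f))
    rw [ih, delta_comm]

lemma iterDelta_cons (n : ℕ) (a : E) (v : Fin n → E) (f : E → F) :
    iterDelta (n + 1) (Fin.cons a v) f = delta a (iterDelta n v f) := by
  simp only [iterDelta, Fin.cons_zero, Fin.cons_succ]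

lemma delta_add (w w' : E) (f : E → F) (x : E) :
    delta (w + w') f x = delta w f x + delta w' f x + delta w (delta w' f) x := by
  simp only [delta, ← add_assoc]
  abel

lemma iterDelta_update (n : ℕ) (v : Fin (n + 1) → E) (i : Fin (n + 1)) (a : E) (f : E → F) :
    iterDelta (n + 1) (Function.update v i a) f
      = delta a (iterDelta n (v ∘ i.succAbove) f) := by
  induction n with
  | zero =>
    have : i = 0 := Subsingleton.elim (α := Fin 1) i 0
    subst this
    show delta (Function.update v 0 a 0) _ = _
    simp [iterDelta]
  | succ n ih =>
    induction i using Fin.cases with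
    | zero =>
      show delta (Function.update v 0 a 0) (iterDelta (n + 1)
          (fun j => Function.update v 0 a j.succ) f) = _
      have h1 : (fun j : Fin (n + 1) => Function.update v 0 a j.succ) = fun j => v j.succ := by
        funext j
        exact Function.update_of_ne (Fin.succ_ne_zero j) _ _
      have h2 : v ∘ (0 : Fin (n + 2)).succAbove = fun j => v j.succ := by
        funext j
        simp [Fin.succAbove]
      rw [h1, h2, Function.update_self]
    | succ j =>
      show delta (Function.update v j.succ a 0) (iterDelta (n + 1)
          (fun m => Function.update v j.succ a m.succ) f) = _
      have h0 : Function.update v j.succ a 0 = v 0 :=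
        Function.update_of_ne (Fin.succ_ne_zero j).symm _ _
      have h1 : (fun m : Fin (n + 1) => Function.update v j.succ a m.succ)
          = Function.update (fun m : Fin (n + 1) => v m.succ) j a := by
        funext m
        by_cases hm : m = j
        · subst hm; simp
        · rw [Function.update_of_ne (fun h => hm (Fin.succ_injective _ h)) _ _,
            Function.update_of_ne hm]
      rw [h0, h1, ih, delta_comm]
      have hr : iterDelta (n + 1) (v ∘ j.succ.succAbove) f
          = delta (v 0) (iterDelta n ((fun m => v m.succ) ∘ j.succAbove) f) := by
        have e0 : (v ∘ j.succ.succAbove) 0 = v 0 := by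
          simp [Function.comp, Fin.succ_succAbove_zero]
        have e1 : (fun m : Fin n => (v ∘ j.succ.succAbove) m.succ)
            = (fun m => v m.succ) ∘ j.succAbove := by
          funext m
          simp [Function.comp, Fin.succ_succAbove_succ]
        simp only [iterDelta, e0, e1]
      rw [hr]

end Aux

/-- Proposition A.3 of Bertram–Glöckner–Neeb: for abelian groups `E, F`, `k ≥ 1` and a map
`q : E → F`, the following are equivalent:
(1) `Δ_{v₀}⋯Δ_{v_k} q(x) = 0` for all `v₀,…,v_k, x`;
(2) `Δ_{v₀}⋯Δ_{v_k} q(0) = 0` for all `v₀,…,v_k`;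
(3) for each `x`, `(v₁,…,v_k) ↦ Δ_{v₁}⋯Δ_{v_k} q(x)` is additive in each argument;
(4) `(v₁,…,v_k) ↦ Δ_{v₁}⋯Δ_{v_k} q(0)` is additive in each argument. -/
theorem stmt_15 (E F : Type*) [AddCommGroup E] [AddCommGroup F]
    (k : ℕ) (hk : 1 ≤ k) (q : E → F) :
    List.TFAE
      [ ∀ (v : Fin (k + 1) → E) (x : E), iterDelta (k + 1) v q x = 0,
        ∀ v : Fin (k + 1) → E, iterDelta (k + 1) v q 0 = 0,
        ∀ (x : E) (v : Fin k → E) (i : Fin k) (w w' : E),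
          iterDelta k (Function.update v i (w + w')) q x
            = iterDelta k (Function.update v i w) q x
              + iterDelta k (Function.update v i w') q x,
        ∀ (v : Fin k → E) (i : Fin k) (w w' : E),
          iterDelta k (Function.update v i (w + w')) q 0
            = iterDelta k (Function.update v i w) q 0
              + iterDelta k (Function.update v i w') q 0 ] := by
  obtain ⟨m, rfl⟩ : ∃ m, k = m + 1 := ⟨k - 1, by omega⟩
  tfae_have 1 → 2 := fun h v => h v 0
  tfae_have 2 → 1 := by
    intro h v x
    show delta (v 0) (iterDelta (m + 1) (fun i => v i.succ) q) x = 0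
    set g := iterDelta (m + 1) (fun i => v i.succ) q with hg
    have hconst : ∀ a : E, g a = g 0 := by
      intro a
      have := h (Fin.cons a (fun i => v i.succ))
      rw [iterDelta_cons] at this
      have : g (0 + a) - g 0 = 0 := this
      rw [zero_add] at this
      exact sub_eq_zero.mp this
    simp only [delta]
    rw [hconst (x + v 0), hconst x, sub_self]
  tfae_have 1 → 3 := by
    intro h x v i w w'
    rw [iterDelta_update, iterDelta_update, iterDelta_update]
    have h0 := h (Fin.cons w (Fin.cons w' (v ∘ i.succAbove))) x
    rw [iterDelta_cons, iterDelta_cons] at h0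
    rw [delta_add, h0, add_zero]
  tfae_have 3 → 4 := fun h => h 0
  tfae_have 4 → 2 := by
    intro h v
    show delta (v 0) (iterDelta (m + 1) (fun i => v i.succ) q) 0 = 0
    have hsplit : iterDelta (m + 1) (fun i : Fin (m + 1) => v i.succ) q
        = delta (v 1) (iterDelta m (fun i : Fin m => v i.succ.succ) q) := by
      rfl
    set G := iterDelta m (fun i : Fin m => v i.succ.succ) q with hG
    rw [hsplit]
    have key : ∀ a : E, iterDelta (m + 1) (Fin.cons a (fun i : Fin m => v i.succ.succ)) q 0
        = delta a G 0 := fun a => by rw [iterDelta_cons]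
    have h4 := h (Fin.cons (0 : E) (fun i : Fin m => v i.succ.succ)) 0 (v 0) (v 1)
    simp only [Fin.update_cons_zero] at h4
    rw [key, key, key] at h4
    have e := delta_add (v 0) (v 1) G 0
    rw [h4] at e
    exact (left_eq_add.mp e)
  tfae_finish
end

section
/- Let 𝕂 be a commutative ring, E, F 𝕂-modules, k ∈ ℕ, and q : E → F homogeneous of degree k over 𝕂 (i.e., q(t•x) = t^k • q(x) for all t ∈ 𝕂, x ∈ E). Then for all x ∈ E, the k-th iterated difference of q at 0 in direction x satisfies (Δ_x)^k q(0) = k! • q(x), where Δ_x q(y) := q(y + x) − q(y). -/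
open Finset Function fwdDiff

lemma fwdDiff_pow (m : ℕ) :
    Δ_[(1:ℤ)] (fun s : ℤ => s ^ m) = fun s => ∑ i ∈ Finset.range m, (m.choose i : ℤ) * s ^ i := by
  funext s
  have h := add_pow s (1:ℤ) m
  simp only [one_pow, mul_one] at h
  rw [Finset.sum_range_succ, Nat.choose_self, Nat.cast_one, mul_one] at h
  simp only [fwdDiff, h]
  rw [add_sub_cancel_right]
  exact Finset.sum_congr rfl fun i _ => by ring

lemma key (n : ℕ) :
    (∀ j < n, ∀ t : ℤ, (fwdDiff (1:ℤ))^[n] (fun s : ℤ => s ^ j) t = 0) ∧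
    (∀ t : ℤ, (fwdDiff (1:ℤ))^[n] (fun s : ℤ => s ^ n) t = n.factorial) := by
  induction n with
  | zero => simp
  | succ n ih =>
    have step : ∀ (m : ℕ) (t : ℤ), (fwdDiff (1:ℤ))^[n+1] (fun s : ℤ => s ^ m) t
        = ∑ i ∈ Finset.range m, (m.choose i : ℤ) * (fwdDiff (1:ℤ))^[n] (fun s : ℤ => s ^ i) t := by
      intro m t
      rw [Function.iterate_succ_apply, fwdDiff_pow]
      have : (fun s : ℤ => ∑ i ∈ Finset.range m, (m.choose i : ℤ) * s ^ i)
          = ∑ i ∈ Finset.range m, (m.choose i : ℤ) • (fun s : ℤ => s ^ i) := by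
        funext s; simp [smul_eq_mul]
      rw [this, fwdDiff_iter_finset_sum]
      simp only [fwdDiff_iter_const_smul]
      simp [smul_eq_mul]
    constructor
    · intro j hj t
      rw [step]
      refine Finset.sum_eq_zero fun i hi => ?_
      rw [ih.1 i (lt_of_lt_of_le (Finset.mem_range.1 hi) (Nat.lt_succ_iff.1 hj)), mul_zero]
    · intro t
      rw [step, Finset.sum_range_succ, ih.2 t,
        Finset.sum_eq_zero fun i hi => by
          rw [ih.1 i (Finset.mem_range.1 hi), mul_zero]]
      simp [Nat.factorial_succ, Nat.choose_succ_self_right]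

lemma int_sum (k : ℕ) :
    ∑ j ∈ Finset.range (k + 1), ((-1:ℤ) ^ (k - j) * k.choose j) * (j:ℤ) ^ k
      = (k.factorial : ℤ) := by
  have h := fwdDiff_iter_eq_sum_shift (1:ℤ) (fun s : ℤ => s ^ k) k 0
  rw [(key k).2 0] at h
  simp only [zero_add, nsmul_eq_mul, mul_one, smul_eq_mul] at h
  exact h.symm

/-- Lemma A.4 of Bertram–Glöckner–Neeb: if `q : E → F` is homogeneous of degree `k` over a
commutative ring `𝕂` (i.e. `q(t•x) = t^k • q(x)`), then `(Δ_x)^k q(0) = k! • q(x)`. -/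
theorem stmt_16 (𝕂 : Type*) [CommRing 𝕂] (E F : Type*)
    [AddCommGroup E] [Module 𝕂 E] [AddCommGroup F] [Module 𝕂 F]
    (k : ℕ) (q : E → F) (hq : ∀ (t : 𝕂) (x : E), q (t • x) = t ^ k • q x) (x : E) :
    (delta x)^[k] q 0 = k.factorial • q x := by
  calc (delta x)^[k] q 0
      = ∑ j ∈ Finset.range (k + 1), ((-1:ℤ) ^ (k - j) * k.choose j) • q (0 + j • x) :=
        fwdDiff_iter_eq_sum_shift x q k 0
    _ = ∑ j ∈ Finset.range (k + 1), (((-1:ℤ) ^ (k - j) * k.choose j) * (j:ℤ) ^ k) • q x := by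
        refine Finset.sum_congr rfl fun j _ => ?_
        have h1 : q ((0:E) + j • x) = ((j:ℤ) ^ k) • q x := by
          rw [zero_add, ← Nat.cast_smul_eq_nsmul 𝕂 j x, hq,
            ← Int.cast_smul_eq_zsmul 𝕂 ((j:ℤ) ^ k)]
          push_cast
          ring_nf
        rw [h1, smul_smul]
    _ = (∑ j ∈ Finset.range (k + 1), ((-1:ℤ) ^ (k - j) * k.choose j) * (j:ℤ) ^ k) • q x := by
        rw [Finset.sum_smul]
    _ = (k.factorial : ℤ) • q x := by rw [int_sum]
    _ = k.factorial • q x := natCast_zsmul _ _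
end
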